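/- Let m be a positive integer, X a simplicial set, φ : X ⟶ Δ_{Z_m} a simplicial map, and p ∈ sDist(X, Δ_{Z_m}). Then Vsupp(φ·p) = φ·Vsupp(p); that is, a simplicial distribution r on (X, Δ_{Z_m}) is a vertex of sDist(X, Δ_{Z_m}) with r ⪯ φ·p if and only if r = φ·q for some vertex q of sDist(X, Δ_{Z_m}) with q ⪯ p. -/

import Mathlib

open CategoryTheory Simplicial Opposite
open scoped NNReal BigOperators

universe u

/-- A distribution on a type `S`: a finitely supported function to `ℝ≥0` with total sum 1. -/
structure FDist (S : Type u) : Type u where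
  toFun : S → ℝ≥0
  finite_support : (Function.support toFun).Finite
  sum_one : ∑ᶠ s, toFun s = 1

/-- A simplicial distribution on the simplicial scenario `(X, Y)`. -/
structure SDist (X Y : SSet.{u}) : Type u where
  d : ∀ n : ℕ, X _⦋n⦌ → FDist (Y _⦋n⦌)
  compat : ∀ {k n : ℕ} (α : (⦋k⦌ : SimplexCategory) ⟶ ⦋n⦌) (x : X _⦋n⦌) (y : Y _⦋k⦌),
    (d k (X.map α.op x)).toFun y = ∑ᶠ y' ∈ {y' : Y _⦋n⦌ | Y.map α.op y' = y}, (d n x).toFun y'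

/-- The simplicial set `Δ_{ℤ_m}` whose `n`-simplices are functions `Fin (n+1) → ZMod m`. -/
def DeltaZ (m : ℕ) : SSet.{0} where
  obj U := Fin (U.unop.len + 1) → ZMod m
  map α := TypeCat.ofHom (fun a => a ∘ α.unop.toOrderHom)
  map_id := by intros; rfl
  map_comp := by intros; rfl

/-- The disjoint union `⊔_{ℤ_m} Δ_{ℤ_m}` of `m` copies of `Δ_{ℤ_m}`. -/
def DeltaZSum (m : ℕ) : SSet.{0} where
  obj U := ZMod m × (Fin (U.unop.len + 1) → ZMod m)
  map α := TypeCat.ofHom (fun x => (x.1, x.2 ∘ α.unop.toOrderHom))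
  map_id := by intros; rfl
  map_comp := by intros; rfl

instance (m : ℕ) (U : SimplexCategoryᵒᵖ) : AddCommGroup ((DeltaZ m).obj U) :=
  Pi.addCommGroup

/-- The edge relation on vertices of a simplicial set. -/
def EdgeRel (X : SSet.{u}) (a b : X _⦋0⦌) : Prop :=
  ∃ σ : X _⦋1⦌, X.δ 1 σ = a ∧ X.δ 0 σ = b

/-- A simplicial set is connected if any two vertices are related by the equivalence
relation generated by the edge relation. -/
def SConnected (X : SSet.{u}) : Prop :=
  ∀ a b : X _⦋0⦌, Relation.EqvGen (EdgeRel X) a b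

/-- A simplicial distribution is noncontextual if it is a mixture of deterministic
distributions. -/
def Noncontextual {X Y : SSet.{u}} (p : SDist X Y) : Prop :=
  ∃ Q : FDist (X ⟶ Y), ∀ (n : ℕ) (x : X _⦋n⦌) (y : Y _⦋n⦌),
    (p.d n x).toFun y = ∑ᶠ φ ∈ setOf (fun φ : X ⟶ Y => φ.app (op ⦋n⦌) x = y), Q.toFun φ

/-- A vertex (extreme point) of the convex set of simplicial distributions. -/
def IsVertex {X Y : SSet.{u}} (p : SDist X Y) : Prop :=
  ∀ (q q' : SDist X Y) (t : ℝ), 0 < t → t < 1 →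
    (∀ (n : ℕ) (x : X _⦋n⦌) (y : Y _⦋n⦌),
      ((p.d n x).toFun y : ℝ) = t * ((q.d n x).toFun y : ℝ) + (1 - t) * ((q'.d n x).toFun y : ℝ)) →
    q = q'

/-- `q ⪯ p` : the support of `q` is contained in that of `p`. -/
def Pre {X Y : SSet.{u}} (q p : SDist X Y) : Prop :=
  ∀ (n : ℕ) (x : X _⦋n⦌) (y : Y _⦋n⦌), (q.d n x).toFun y ≠ 0 → (p.d n x).toFun y ≠ 0
/-- `r = φ·p`: the simplicial distribution `r` is the translate of `p` by the simplicial
map `φ : X ⟶ Δ_{ℤ_m}`, i.e. `r_x(y) = p_x(y − φ_x)`. -/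
def ActEq {m : ℕ} {X : SSet.{0}} (φ : X ⟶ DeltaZ m) (p r : SDist X (DeltaZ m)) : Prop :=
  ∀ (n : ℕ) (x : X _⦋n⦌) (y : (DeltaZ m) _⦋n⦌),
    (r.d n x).toFun y = (p.d n x).toFun (y - φ.app (op ⦋n⦌) x)

/-! Translation by `φ` is an affine bijection of `sDist(X, Δ_{ℤ_m})`, with inverse the
translation by `-φ`, and it preserves supports up to the same translation. Hence it preserves
extreme points and carries the vertices below `p` exactly onto the vertices below `φ·p`. -/

theorem FDist.ext {S : Type u} {f g : FDist S} (h : ∀ s, f.toFun s = g.toFun s) : f = g := by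
  cases f; cases g
  congr
  exact funext h

theorem SDist.ext {X Y : SSet.{u}} {p q : SDist X Y}
    (h : ∀ n x y, (p.d n x).toFun y = (q.d n x).toFun y) : p = q := by
  cases p; cases q
  congr
  funext n x
  exact FDist.ext (h n x)

namespace DeltaZ

variable {m : ℕ} {X : SSet.{0}}

theorem map_op_add {k n : ℕ} (α : (⦋k⦌ : SimplexCategory) ⟶ ⦋n⦌) (a b : (DeltaZ m) _⦋n⦌) :
    (DeltaZ m).map α.op (a + b) = (DeltaZ m).map α.op a + (DeltaZ m).map α.op b := rfl

theorem map_op_sub {k n : ℕ} (α : (⦋k⦌ : SimplexCategory) ⟶ ⦋n⦌) (a b : (DeltaZ m) _⦋n⦌) :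
    (DeltaZ m).map α.op (a - b) = (DeltaZ m).map α.op a - (DeltaZ m).map α.op b := rfl

def negHom (ψ : X ⟶ DeltaZ m) : X ⟶ DeltaZ m where
  app U := TypeCat.ofHom fun x => -ψ.app U x
  naturality U V f := by
    ext x
    exact congrArg Neg.neg (NatTrans.naturality_apply ψ f x)

@[simp]
theorem negHom_app (ψ : X ⟶ DeltaZ m) (U : SimplexCategoryᵒᵖ) (x : X.obj U) :
    (negHom ψ).app U x = -ψ.app U x := rfl

end DeltaZ

namespace SDist

open DeltaZ

variable {m : ℕ} {X : SSet.{0}}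

def translate (ψ : X ⟶ DeltaZ m) (q : SDist X (DeltaZ m)) : SDist X (DeltaZ m) where
  d n x :=
    { toFun := fun y => (q.d n x).toFun (y - ψ.app (op ⦋n⦌) x)
      finite_support :=
        (q.d n x).finite_support.preimage (Equiv.subRight (ψ.app (op ⦋n⦌) x)).injective.injOn
      sum_one := by
        rw [← (q.d n x).sum_one]
        exact finsum_comp_equiv (Equiv.subRight (ψ.app (op ⦋n⦌) x)) }
  compat := by
    intro k n α x y
    have hψ : ψ.app (op ⦋k⦌) (X.map α.op x) = (DeltaZ m).map α.op (ψ.app (op ⦋n⦌) x) :=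
      NatTrans.naturality_apply ψ α.op x
    change (q.d k (X.map α.op x)).toFun (y - ψ.app (op ⦋k⦌) (X.map α.op x)) = _
    rw [q.compat α x, hψ]
    refine finsum_mem_eq_of_bijOn (fun y' => y' + ψ.app (op ⦋n⦌) x) ⟨?_, ?_, ?_⟩ ?_
    · intro y' hy'
      simp only [Set.mem_ofPred_eq] at hy' ⊢
      rw [map_op_add, hy', sub_add_cancel]
    · exact fun a _ b _ h => add_right_cancel h
    · intro y' hy'
      refine ⟨y' - ψ.app (op ⦋n⦌) x, ?_, sub_add_cancel y' _⟩
      simp only [Set.mem_ofPred_eq] at hy' ⊢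
      rw [map_op_sub, hy']
    · intro y' _
      simp

@[simp]
theorem translate_apply (ψ : X ⟶ DeltaZ m) (q : SDist X (DeltaZ m)) (n : ℕ) (x : X _⦋n⦌)
    (y : (DeltaZ m) _⦋n⦌) :
    ((q.translate ψ).d n x).toFun y = (q.d n x).toFun (y - ψ.app (op ⦋n⦌) x) := rfl

theorem actEq_iff_eq_translate {ψ : X ⟶ DeltaZ m} {q r : SDist X (DeltaZ m)} :
    ActEq ψ q r ↔ r = q.translate ψ :=
  ⟨fun h => SDist.ext h, fun h => h ▸ fun _ _ _ => rfl⟩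

@[simp]
theorem translate_negHom_translate (ψ : X ⟶ DeltaZ m) (q : SDist X (DeltaZ m)) :
    (q.translate ψ).translate (negHom ψ) = q :=
  SDist.ext fun n x y => by simp

@[simp]
theorem translate_translate_negHom (ψ : X ⟶ DeltaZ m) (q : SDist X (DeltaZ m)) :
    (q.translate (negHom ψ)).translate ψ = q :=
  SDist.ext fun n x y => by simp

theorem Pre.translate {q p : SDist X (DeltaZ m)} (h : Pre q p) (ψ : X ⟶ DeltaZ m) :
    Pre (q.translate ψ) (p.translate ψ) :=
  fun n x y => h n x (y - ψ.app (op ⦋n⦌) x)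

theorem IsVertex.translate {q : SDist X (DeltaZ m)} (hq : IsVertex q) (ψ : X ⟶ DeltaZ m) :
    IsVertex (q.translate ψ) := by
  intro q₁ q₂ t ht₀ ht₁ hmix
  have hback : q₁.translate (negHom ψ) = q₂.translate (negHom ψ) := by
    refine hq _ _ t ht₀ ht₁ fun n x y => ?_
    simpa using hmix n x (y + ψ.app (op ⦋n⦌) x)
  simpa using congrArg (SDist.translate ψ) hback

end SDist

open SDist

theorem stmt12_general (m : ℕ) (X : SSet.{0}) (φ : X ⟶ DeltaZ m)
    (p p' : SDist X (DeltaZ m)) (hp' : ActEq φ p p') (r : SDist X (DeltaZ m)) :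
    (IsVertex r ∧ Pre r p') ↔
      ∃ q : SDist X (DeltaZ m), IsVertex q ∧ Pre q p ∧ ActEq φ q r := by
  rw [actEq_iff_eq_translate.mp hp']
  constructor
  · rintro ⟨hr, hrp⟩
    refine ⟨r.translate (DeltaZ.negHom φ), hr.translate _, ?_, ?_⟩
    · simpa using hrp.translate (DeltaZ.negHom φ)
    · exact actEq_iff_eq_translate.mpr (translate_translate_negHom φ r).symm
  · rintro ⟨q, hq, hqp, hqr⟩
    rw [actEq_iff_eq_translate.mp hqr]
    exact ⟨hq.translate φ, hqp.translate φ⟩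

/-- Proposition 2.25: `Vsupp(φ·p) = φ·Vsupp(p)`: a simplicial distribution `r` is a
vertex with `r ⪯ φ·p` iff `r = φ·q` for some vertex `q` with `q ⪯ p`. -/
theorem stmt12 (m : ℕ) [NeZero m] (X : SSet.{0}) (φ : X ⟶ DeltaZ m)
    (p p' : SDist X (DeltaZ m)) (hp' : ActEq φ p p') (r : SDist X (DeltaZ m)) :
    (IsVertex r ∧ Pre r p') ↔
      ∃ q : SDist X (DeltaZ m), IsVertex q ∧ Pre q p ∧ ActEq φ q r :=
  stmt12_general m X φ p p' hp' r
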